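/- Let k ≥ 1 and 0 < R₀ < R₁, and let H(p,q) := (|p|² − |q|²)/2 on ℝ^{2k}. For any u ∈ ℝ^k with |u| = √R₀, the curve γ(t) := (e^t·u/√2, e^t·u/√2) is a solution of Hamilton's equations of H defined for all t ∈ ℝ; moreover γ(0) belongs to the floor 𝓕 and γ(t*) belongs to the ceiling 𝓒 for t* := (1/2)·log(R₁/R₀) > 0. Consequently, the quadratic Hamiltonian H admits a Hamiltonian chord from 𝓕 to 𝓒 of time-length (1/2)·log(R₁/R₀). -/

import Mathlib

/-! The Hamiltonian vector field of `H = (|p|² - |q|²)/2` is `(p, q) ↦ (q, p)`, so along the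
diagonal `p = q` Hamilton's equations reduce to the scalar equation `f' = f`, solved by `eᵗ`.
A diagonal point `(w, w)` is the tetragon point with `θ = π/4` on the sphere of radius
`√2·|w|`; along `γ` this radius is `eᵗ√R₀`, which equals `√R₁` exactly when
`t = (1/2)·log(R₁/R₀)`. -/

open Real Set

noncomputable section

/-- `ℝ^k` as a function type; the Euclidean norm is `eucNorm`. -/
abbrev Vec (k : ℕ) := Fin k → ℝ

/-- The phase space `ℝ^{2k} = ℝ^k(p) × ℝ^k(q)`. -/
abbrev Phase (k : ℕ) := Vec k × Vec k

/-- Euclidean norm on `ℝ^k`. -/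
def eucNorm {k : ℕ} (x : Vec k) : ℝ := Real.sqrt (∑ i, x i ^ 2)

/-- The vector of partial derivatives of `f` at `x` (the gradient w.r.t. the Euclidean
structure). -/
def gradVec {k : ℕ} (f : Vec k → ℝ) (x : Vec k) : Vec k :=
  fun i => fderiv ℝ f x (Pi.single i 1)

/-- `γ` solves Hamilton's equations `p' = -∂G/∂q`, `q' = ∂G/∂p` of the time-dependent
Hamiltonian `G` at every time `t ∈ S`. -/
def IsHamSolOn {k : ℕ} (G : Phase k × ℝ → ℝ) (γ : ℝ → Phase k) (S : Set ℝ) : Prop :=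
  ∀ t ∈ S,
    HasDerivAt (fun s => (γ s).1) (-(gradVec (fun q => G (((γ t).1, q), t)) (γ t).2)) t ∧
    HasDerivAt (fun s => (γ s).2) (gradVec (fun p => G ((p, (γ t).2), t)) (γ t).1) t

/-- `G` is complete: through every initial condition there is a solution of Hamilton's
equations defined on all of `ℝ`. -/
def HamComplete {k : ℕ} (G : Phase k × ℝ → ℝ) : Prop :=
  ∀ (t₀ : ℝ) (x₀ : Phase k), ∃ γ : ℝ → Phase k, γ t₀ = x₀ ∧ IsHamSolOn G γ Set.univ

/-- The floor (for `R = R₀`) resp. ceiling (for `R = R₁`) of the Lagrangian tetragon in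
`ℂ^k = ℝ^{2k}` with `T = π/4`: the points `(√R·cos θ·u, √R·sin θ·u)`, `|u| = 1`,
`θ ∈ [0, π/2]`. -/
def sphereFloor (k : ℕ) (R : ℝ) : Set (Phase k) :=
  {x | ∃ (u : Vec k) (θ : ℝ), eucNorm u = 1 ∧ θ ∈ Icc 0 (π / 2) ∧
        x = ((Real.sqrt R * Real.cos θ) • u, (Real.sqrt R * Real.sin θ) • u)}

/-- The high wall `{(p, 0) : √R₀ ≤ |p| ≤ √R₁}`. -/
def sphereHigh (k : ℕ) (R₀ R₁ : ℝ) : Set (Phase k) :=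
  {x | x.2 = 0 ∧ Real.sqrt R₀ ≤ eucNorm x.1 ∧ eucNorm x.1 ≤ Real.sqrt R₁}

/-- The low wall `{(0, q) : √R₀ ≤ |q| ≤ √R₁}`. -/
def sphereLow (k : ℕ) (R₀ R₁ : ℝ) : Set (Phase k) :=
  {x | x.1 = 0 ∧ Real.sqrt R₀ ≤ eucNorm x.2 ∧ eucNorm x.2 ≤ Real.sqrt R₁}

section QuadraticHamiltonian

variable {k : ℕ}

lemma eucNorm_smul (c : ℝ) (x : Vec k) : eucNorm (c • x) = |c| * eucNorm x := by
  have hsum : ∑ i, (c • x) i ^ 2 = c ^ 2 * ∑ i, x i ^ 2 := by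
    simp only [Pi.smul_apply, smul_eq_mul, mul_pow, Finset.mul_sum]
  rw [eucNorm, eucNorm, hsum, Real.sqrt_mul (sq_nonneg c), Real.sqrt_sq_eq_abs]

lemma HasFDerivAt.gradVec_eq {f : Vec k → ℝ} {f' : Vec k →L[ℝ] ℝ} {x : Vec k}
    (hf : HasFDerivAt f f' x) : gradVec f x = fun i => f' (Pi.single i 1) := by
  show (fun i => fderiv ℝ f x (Pi.single i 1)) = _
  rw [hf.fderiv]

lemma hasFDerivAt_sum_sq (x : Vec k) :
    HasFDerivAt (fun y : Vec k => ∑ i, y i ^ 2)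
      (∑ i, (2 * x i) • ContinuousLinearMap.proj (R := ℝ) (φ := fun _ : Fin k => ℝ) i) x := by
  refine HasFDerivAt.fun_sum fun i _ => ?_
  simpa using ((ContinuousLinearMap.proj (R := ℝ) (φ := fun _ : Fin k => ℝ) i).hasFDerivAt
    (x := x)).pow 2

lemma sum_sq_fderiv_apply_single (x : Vec k) (i : Fin k) :
    (∑ j, (2 * x j) • ContinuousLinearMap.proj (R := ℝ) (φ := fun _ : Fin k => ℝ) j)
      (Pi.single i 1) = 2 * x i := by
  simp [Pi.single_apply]

lemma gradVec_quadHam_momentum (p q : Vec k) :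
    gradVec (fun p' : Vec k => (∑ i, p' i ^ 2 - ∑ i, q i ^ 2) / 2) p = p := by
  have h := ((hasFDerivAt_sum_sq p).sub_const (∑ i, q i ^ 2)).mul_const (2⁻¹ : ℝ)
  simp only [← div_eq_mul_inv] at h
  rw [h.gradVec_eq]
  ext i
  simp only [smul_apply, sum_sq_fderiv_apply_single, smul_eq_mul]
  ring

lemma gradVec_quadHam_position (p q : Vec k) :
    gradVec (fun q' : Vec k => (∑ i, p i ^ 2 - ∑ i, q' i ^ 2) / 2) q = -q := by
  have h := ((hasFDerivAt_sum_sq q).const_sub (∑ i, p i ^ 2)).mul_const (2⁻¹ : ℝ)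
  simp only [← div_eq_mul_inv] at h
  rw [h.gradVec_eq]
  ext i
  simp only [smul_apply, neg_apply, sum_sq_fderiv_apply_single, smul_eq_mul, Pi.neg_apply]
  ring

lemma isHamSolOn_quadHam_diagonal {f : ℝ → ℝ} (hf : ∀ t, HasDerivAt f (f t) t) (v : Vec k) :
    IsHamSolOn (fun z : Phase k × ℝ => (∑ i, z.1.1 i ^ 2 - ∑ i, z.1.2 i ^ 2) / 2)
      (fun t => (f t • v, f t • v)) univ := by
  intro t _
  simp only [gradVec_quadHam_momentum, gradVec_quadHam_position, neg_neg]
  exact ⟨(hf t).smul_const v, (hf t).smul_const v⟩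

lemma diagonal_mem_sphereFloor {R : ℝ} (hR : 0 < R) {w : Vec k}
    (hw : eucNorm w = √R / √2) : ((w, w) : Phase k) ∈ sphereFloor k R := by
  have hsqrtR : 0 < √R := Real.sqrt_pos.mpr hR
  have hsqrt2 : 0 < √(2 : ℝ) := by positivity
  have hscale : √R * (√2 / 2) * (√2 / √R) = 1 := by
    field_simp
    rw [Real.sq_sqrt zero_le_two]
  refine ⟨(√2 / √R) • w, π / 4, ?_, ⟨by positivity, by linarith [pi_pos]⟩, ?_⟩
  · rw [eucNorm_smul, hw, abs_of_pos (by positivity)]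
    field_simp
  · rw [Real.cos_pi_div_four, Real.sin_pi_div_four, smul_smul, hscale, one_smul]

lemma exp_half_mul_log {x : ℝ} (hx : 0 < x) : exp (1 / 2 * log x) = √x := by
  rw [Real.sqrt_eq_rpow, Real.rpow_def_of_pos hx, mul_comm]

end QuadraticHamiltonian

theorem stmt_7_general (k : ℕ) (R₀ R₁ : ℝ) (hR₀ : 0 < R₀) (hR : R₀ < R₁)
    (H : Phase k → ℝ) (hH : H = fun x => (∑ i, x.1 i ^ 2 - ∑ i, x.2 i ^ 2) / 2)
    (u : Vec k) (hu : eucNorm u = Real.sqrt R₀)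
    (γ : ℝ → Phase k)
    (hγ : γ = fun t => ((Real.exp t / Real.sqrt 2) • u, (Real.exp t / Real.sqrt 2) • u))
    (tstar : ℝ) (htstar : tstar = (1 / 2) * Real.log (R₁ / R₀)) :
    IsHamSolOn (fun z => H z.1) γ univ ∧
    0 < tstar ∧
    γ 0 ∈ sphereFloor k R₀ ∧ γ tstar ∈ sphereFloor k R₁ ∧
    (∃ (t₀ : ℝ) (σ : ℝ → Phase k),
      IsHamSolOn (fun z => H z.1) σ (Icc t₀ (t₀ + tstar)) ∧
      σ t₀ ∈ sphereFloor k R₀ ∧ σ (t₀ + tstar) ∈ sphereFloor k R₁) := by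
  subst hH htstar
  have hsol : IsHamSolOn _ γ univ :=
    hγ ▸ isHamSolOn_quadHam_diagonal (fun t => (Real.hasDerivAt_exp t).div_const √2) u
  have hR₁ : 0 < R₁ := hR₀.trans hR
  have hmem {R t : ℝ} (hR : 0 < R) (ht : exp t * √R₀ = √R) : γ t ∈ sphereFloor k R := by
    rw [hγ]
    refine diagonal_mem_sphereFloor hR ?_
    rw [eucNorm_smul, hu, abs_of_pos (by positivity), ← ht]
    ring
  have hfloor : γ 0 ∈ sphereFloor k R₀ := hmem hR₀ (by rw [exp_zero, one_mul])
  have hceiling : γ (1 / 2 * log (R₁ / R₀)) ∈ sphereFloor k R₁ := by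
    refine hmem hR₁ ?_
    rw [exp_half_mul_log (div_pos hR₁ hR₀), ← Real.sqrt_mul (div_pos hR₁ hR₀).le,
      div_mul_cancel₀ _ hR₀.ne']
  have htstar_pos : 0 < 1 / 2 * log (R₁ / R₀) :=
    mul_pos one_half_pos (Real.log_pos ((one_lt_div hR₀).mpr hR))
  exact ⟨hsol, htstar_pos, hfloor, hceiling, 0, γ, fun t _ => hsol t trivial, hfloor,
    by rwa [zero_add]⟩

/-- for the quadratic Hamiltonian `H = (|p|²-|q|²)/2`, the explicit curve
`γ(t) = (eᵗ·u/√2, eᵗ·u/√2)` (with `|u| = √R₀`) is a global solution of Hamilton's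
equations; it starts on the floor and reaches the ceiling at time
`t* = (1/2)·log(R₁/R₀) > 0`, so `H` has a chord from the floor to the ceiling of
time-length `(1/2)·log(R₁/R₀)`. -/
theorem stmt_7 (k : ℕ) (hk : 1 ≤ k) (R₀ R₁ : ℝ) (hR₀ : 0 < R₀) (hR : R₀ < R₁)
    (H : Phase k → ℝ) (hH : H = fun x => (∑ i, x.1 i ^ 2 - ∑ i, x.2 i ^ 2) / 2)
    (u : Vec k) (hu : eucNorm u = Real.sqrt R₀)
    (γ : ℝ → Phase k)
    (hγ : γ = fun t => ((Real.exp t / Real.sqrt 2) • u, (Real.exp t / Real.sqrt 2) • u))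
    (tstar : ℝ) (htstar : tstar = (1 / 2) * Real.log (R₁ / R₀)) :
    IsHamSolOn (fun z => H z.1) γ univ ∧
    0 < tstar ∧
    γ 0 ∈ sphereFloor k R₀ ∧ γ tstar ∈ sphereFloor k R₁ ∧
    (∃ (t₀ : ℝ) (σ : ℝ → Phase k),
      IsHamSolOn (fun z => H z.1) σ (Icc t₀ (t₀ + tstar)) ∧
      σ t₀ ∈ sphereFloor k R₀ ∧ σ (t₀ + tstar) ∈ sphereFloor k R₁) :=
  stmt_7_general k R₀ R₁ hR₀ hR H hH u hu γ hγ tstar htstar
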